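/- Let D ⊆ Δ⁺ be a basic subset with diagram as defined, and let ξ = ξ_i ∈ C(D) be written as ξ = α + β for positive roots α, β with col(α) = col(ξ) and row(β) = row(ξ). Suppose both places α and β are unmarked on the diagram before step i. If A_ξ ≠ ∅, then A_α ≠ ∅. -/

import Mathlib

/-- A positive root `(i,j)`: `n ≥ i > j ≥ 1`. -/
def IsPosRoot (n : ℕ) (γ : ℕ × ℕ) : Prop := 1 ≤ γ.2 ∧ γ.2 < γ.1 ∧ γ.1 ≤ n

/-- `γ` is the sum of the roots `α` and `β` (in either order):
`(i,j) + (j,k) = (i,k)`. -/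
def RootSum (α β γ : ℕ × ℕ) : Prop :=
  (α.2 = β.1 ∧ γ = (α.1, β.2)) ∨ (β.2 = α.1 ∧ γ = (β.1, α.2))

/-- A basic subset: a set of positive roots with at most one root in each
row and at most one root in each column. -/
def IsBasic (n : ℕ) (D : Set (ℕ × ℕ)) : Prop :=
  (∀ γ ∈ D, IsPosRoot n γ) ∧
  (∀ α ∈ D, ∀ β ∈ D, α.1 = β.1 → α = β) ∧
  (∀ α ∈ D, ∀ β ∈ D, α.2 = β.2 → α = β)

/-- A positive root `α` is `D`-singular if `α + β ∈ D` for some positive root `β`. -/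
def IsSingular (n : ℕ) (D : Set (ℕ × ℕ)) (α : ℕ × ℕ) : Prop :=
  IsPosRoot n α ∧ ∃ β γ, IsPosRoot n β ∧ RootSum α β γ ∧ γ ∈ D

/-- `M(D) = R(D) \ D`, where `R(D)` is the set of `D`-regular positive roots. -/
def MD (n : ℕ) (D : Set (ℕ × ℕ)) : Set (ℕ × ℕ) :=
  {γ | IsPosRoot n γ ∧ ¬ IsSingular n D γ ∧ γ ∉ D}
open scoped Classical

/-- Marks used in the diagram of a basic subset. -/
inductive Mark : Type
  | otimes : Mark
  | plus : Mark
  | minus : Mark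
  | bullet : Mark
deriving DecidableEq

/-- A marking state of the diagram: a partial assignment of marks to places. -/
abbrev MState : Type := ℕ × ℕ → Option Mark

/-- Step 0 of the diagram construction: every root of `M(D)` is marked `•`. -/
noncomputable def initMark (n : ℕ) (D : Set (ℕ × ℕ)) : MState :=
  fun γ => if γ ∈ MD n D then some Mark.bullet else none

/-- One step of the diagram construction: mark `ξ` with `⊗`, and for every
decomposition `ξ = α + β` with `col α = col ξ`, `row β = row ξ` and both
`α`, `β` unmarked, mark `α` with `+` and `β` with `−`. -/
noncomputable def markStep (s : MState) (ξ : ℕ × ℕ) : MState :=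
  fun γ =>
    if γ = ξ then some Mark.otimes
    else if γ.2 = ξ.2 ∧ ξ.2 < γ.1 ∧ γ.1 < ξ.1 ∧ s γ = none ∧ s (ξ.1, γ.1) = none then
      some Mark.plus
    else if γ.1 = ξ.1 ∧ ξ.2 < γ.2 ∧ γ.2 < ξ.1 ∧ s γ = none ∧ s (γ.2, ξ.2) = none then
      some Mark.minus
    else s γ

/-- The list of all positive roots in decreasing order with respect to `≻`
(`(k,m) ≻ (i,j)` iff `m < j`, or `m = j` and `k > i`). -/
def rootList (n : ℕ) : List (ℕ × ℕ) :=
  (List.range n).flatMap (fun j0 =>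
    (List.range n).filterMap (fun k =>
      if j0 + 1 < n - k then some (n - k, j0 + 1) else none))

/-- Run the diagram construction along a list of places, recording at each
step `i` the pair (`ξ_i`, state after step `i`). -/
noncomputable def diagRun (s : MState) : List (ℕ × ℕ) → List ((ℕ × ℕ) × MState)
  | [] => []
  | ξ :: rest =>
    if s ξ = none then (ξ, markStep s ξ) :: diagRun (markStep s ξ) rest
    else diagRun s rest

/-- The full run of the diagram construction for a basic subset `D`. -/
noncomputable def diagSeq (n : ℕ) (D : Set (ℕ × ℕ)) : List ((ℕ × ℕ) × MState) :=
  diagRun (initMark n D) (rootList n)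

/-- `c`, the number of steps (= number of `⊗` marks) of the diagram. -/
noncomputable def numSteps (n : ℕ) (D : Set (ℕ × ℕ)) : ℕ := (diagSeq n D).length

/-- `ξ_i`, the root marked `⊗` at step `i` (for `1 ≤ i ≤ c`). -/
noncomputable def xiRoot (n : ℕ) (D : Set (ℕ × ℕ)) (i : ℕ) : ℕ × ℕ :=
  (((diagSeq n D).getD (i - 1) ((0, 0), initMark n D))).1

/-- The state of the diagram after step `i` (for `0 ≤ i ≤ c`); the state
"before step `i`" is `stateAfter n D (i-1)`. -/
noncomputable def stateAfter (n : ℕ) (D : Set (ℕ × ℕ)) : ℕ → MState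
  | 0 => initMark n D
  | i + 1 => (((diagSeq n D).getD i ((0, 0), initMark n D))).2

/-- `C(D)`: the set of roots marked `⊗` on the diagram. -/
noncomputable def CD (n : ℕ) (D : Set (ℕ × ℕ)) : Set (ℕ × ℕ) :=
  {γ | γ ∈ (diagSeq n D).map Prod.fst}

/-- `A_γ`: the set of roots of `C(D)` in the same row as `γ`, strictly to the
left of `γ`. -/
noncomputable def AD (n : ℕ) (D : Set (ℕ × ℕ)) (γ : ℕ × ℕ) : Set (ℕ × ℕ) :=
  {γ' | γ' ∈ CD n D ∧ γ'.1 = γ.1 ∧ γ'.2 < γ.2}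

/-! ### Auxiliary infrastructure for the proof of Statement 6 -/

/-- The strict order `≻` on places: `(k,m) ≻ (i,j)` iff `m < j`, or `m = j` and `k > i`. -/
def Xgt (a b : ℕ × ℕ) : Prop := a.2 < b.2 ∨ (a.2 = b.2 ∧ b.1 < a.1)

lemma xgt_irrefl (a : ℕ × ℕ) : ¬ Xgt a a := by simp [Xgt]

lemma xgt_asymm {a b : ℕ × ℕ} (h : Xgt a b) (h' : Xgt b a) : False := by
  rcases h with h | ⟨h1, h2⟩ <;> rcases h' with h' | ⟨h1', h2'⟩ <;> omega

/-- Condition under which `γ` receives `+` at the step of `ξ`. -/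
@[reducible] def PlusCond (s : MState) (ξ γ : ℕ × ℕ) : Prop :=
  γ.2 = ξ.2 ∧ ξ.2 < γ.1 ∧ γ.1 < ξ.1 ∧ s γ = none ∧ s (ξ.1, γ.1) = none

/-- Condition under which `γ` receives `−` at the step of `ξ`. -/
@[reducible] def MinusCond (s : MState) (ξ γ : ℕ × ℕ) : Prop :=
  γ.1 = ξ.1 ∧ ξ.2 < γ.2 ∧ γ.2 < ξ.1 ∧ s γ = none ∧ s (γ.2, ξ.2) = none

lemma markStep_eq (s : MState) (ξ γ : ℕ × ℕ) :
    markStep s ξ γ = if γ = ξ then some Mark.otimes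
      else if PlusCond s ξ γ then some Mark.plus
      else if MinusCond s ξ γ then some Mark.minus
      else s γ := rfl

lemma markStep_some {s : MState} {ξ γ : ℕ × ℕ} {m : Mark} (hξ : s ξ = none)
    (h : s γ = some m) : markStep s ξ γ = some m := by
  rw [markStep_eq]
  split_ifs with h1 h2 h3
  · subst h1; rw [hξ] at h; exact absurd h (by simp)
  · exact absurd h (by rw [h2.2.2.2.1]; simp)
  · exact absurd h (by rw [h3.2.2.2.1]; simp)
  · exact h

lemma markStep_none {s : MState} {ξ γ : ℕ × ℕ} (h : markStep s ξ γ = none) :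
    s γ = none ∧ γ ≠ ξ := by
  rw [markStep_eq] at h
  split_ifs at h with h1 h2 h3
  exact ⟨h, h1⟩

lemma markStep_plus {s : MState} {ξ γ : ℕ × ℕ} (hne : γ ≠ ξ) (hc : PlusCond s ξ γ) :
    markStep s ξ γ = some Mark.plus := by
  rw [markStep_eq, if_neg hne, if_pos hc]

lemma markStep_minus {s : MState} {ξ γ : ℕ × ℕ} (hne : γ ≠ ξ) (hnp : ¬ PlusCond s ξ γ)
    (hc : MinusCond s ξ γ) : markStep s ξ γ = some Mark.minus := by
  rw [markStep_eq, if_neg hne, if_neg hnp, if_pos hc]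

lemma diagRun_fst_mem : ∀ (L : List (ℕ × ℕ)) (s : MState) (p : (ℕ × ℕ) × MState),
    p ∈ diagRun s L → p.1 ∈ L := by
  intro L
  induction L with
  | nil => intro s p hp; simp [diagRun] at hp
  | cons a rest ih =>
    intro s p hp
    rw [diagRun] at hp
    split_ifs at hp with h
    · rcases List.mem_cons.1 hp with h' | h'
      · subst h'; exact List.mem_cons_self
      · exact List.mem_cons_of_mem _ (ih _ _ h')
    · exact List.mem_cons_of_mem _ (ih _ _ hp)

/-- Well-formedness of a run of the diagram construction. -/
inductive RunOK (n : ℕ) : MState → List ((ℕ × ℕ) × MState) → Prop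
  | nil (s : MState) : RunOK n s []
  | cons (s : MState) (ξ : ℕ × ℕ) (tr : List ((ℕ × ℕ) × MState))
      (h0 : s ξ = none) (h1 : IsPosRoot n ξ)
      (h2 : ∀ γ, IsPosRoot n γ → Xgt γ ξ → s γ ≠ none)
      (h3 : ∀ p ∈ tr, Xgt ξ p.1)
      (h4 : RunOK n (markStep s ξ) tr) : RunOK n s ((ξ, markStep s ξ) :: tr)

lemma diagRun_runOK (n : ℕ) : ∀ (L : List (ℕ × ℕ)) (s : MState),
    L.Pairwise Xgt → (∀ γ ∈ L, IsPosRoot n γ) →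
    (∀ γ, IsPosRoot n γ → s γ = none → γ ∈ L) → RunOK n s (diagRun s L) := by
  intro L
  induction L with
  | nil => intro s _ _ _; rw [diagRun]; exact RunOK.nil s
  | cons a rest ih =>
    intro s hsort hpos hcomp
    rw [diagRun]
    split_ifs with h
    · refine RunOK.cons s a _ h (hpos a (List.mem_cons_self)) ?_ ?_ ?_
      · intro γ hγ hgt hnone
        rcases List.mem_cons.1 (hcomp γ hγ hnone) with h' | h'
        · subst h'; exact xgt_irrefl _ hgt
        · exact xgt_asymm hgt ((List.pairwise_cons.1 hsort).1 γ h')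
      · intro p hp
        exact (List.pairwise_cons.1 hsort).1 p.1 (diagRun_fst_mem _ _ _ hp)
      · refine ih _ (List.pairwise_cons.1 hsort).2
          (fun γ hγ => hpos γ (List.mem_cons_of_mem _ hγ)) ?_
        intro γ hγ hnone
        obtain ⟨hn, hne⟩ := markStep_none hnone
        rcases List.mem_cons.1 (hcomp γ hγ hn) with h' | h'
        · exact absurd h' hne
        · exact h'
    · refine ih _ (List.pairwise_cons.1 hsort).2
        (fun γ hγ => hpos γ (List.mem_cons_of_mem _ hγ)) ?_
      intro γ hγ hnone
      rcases List.mem_cons.1 (hcomp γ hγ hnone) with h' | h'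
      · subst h'; exact absurd hnone h
      · exact h'
lemma rootList_mem {n : ℕ} {γ : ℕ × ℕ} (h : IsPosRoot n γ) : γ ∈ rootList n := by
  obtain ⟨h1, h2, h3⟩ := h
  rw [rootList, List.mem_flatMap]
  refine ⟨γ.2 - 1, List.mem_range.2 (by omega), ?_⟩
  rw [List.mem_filterMap]
  refine ⟨n - γ.1, List.mem_range.2 (by omega), ?_⟩
  rw [if_pos (by omega)]
  have : n - (n - γ.1) = γ.1 := by omega
  rw [this]
  have : γ.2 - 1 + 1 = γ.2 := by omega
  rw [this]

lemma rootList_pos {n : ℕ} {γ : ℕ × ℕ} (h : γ ∈ rootList n) : IsPosRoot n γ := by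
  rw [rootList, List.mem_flatMap] at h
  obtain ⟨j0, hj0, h⟩ := h
  rw [List.mem_filterMap] at h
  obtain ⟨k, hk, h⟩ := h
  rw [List.mem_range] at hj0 hk
  split_ifs at h with hc
  · cases h; exact ⟨by omega, by omega, by omega⟩

lemma rootList_sorted (n : ℕ) : (rootList n).Pairwise Xgt := by
  rw [rootList, List.pairwise_flatMap]
  constructor
  · intro j0 _
    rw [List.pairwise_filterMap]
    refine List.Pairwise.imp ?_ List.pairwise_lt_range
    intro k k' hkk' a ha b hb
    split_ifs at ha hb with h1 h2
    all_goals first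
      | exact (Option.not_mem_none a ha).elim
      | exact (Option.not_mem_none b hb).elim
      | (obtain rfl := Option.mem_some_iff.1 ha
         obtain rfl := Option.mem_some_iff.1 hb
         exact Or.inr ⟨rfl, by omega⟩)
  · refine List.Pairwise.imp ?_ List.pairwise_lt_range
    intro j0 j0' hj a ha b hb
    rw [List.mem_filterMap] at ha hb
    obtain ⟨k, _, ha⟩ := ha
    obtain ⟨k', _, hb⟩ := hb
    split_ifs at ha hb with h1 h2
    all_goals first
      | exact (Option.not_mem_none a ha).elim
      | exact (Option.not_mem_none b hb).elim
      | (obtain rfl := Option.mem_some_iff.1 ha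
         obtain rfl := Option.mem_some_iff.1 hb
         exact Or.inl (by simpa using hj))
/-- The state before step `j+1` (0-indexed: before processing entry `j`) of a run. -/
noncomputable def preS (s : MState) (tr : List ((ℕ × ℕ) × MState))
    (d : (ℕ × ℕ) × MState) (j : ℕ) : MState :=
  if j = 0 then s else (tr.getD (j - 1) d).2

lemma runOK_facts {n : ℕ} (d : (ℕ × ℕ) × MState) :
    ∀ (tr : List ((ℕ × ℕ) × MState)) (s : MState), RunOK n s tr →
    ∀ j, j < tr.length →
      ((tr.getD j d).2 = markStep (preS s tr d j) (tr.getD j d).1) ∧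
      (preS s tr d j) (tr.getD j d).1 = none ∧
      IsPosRoot n (tr.getD j d).1 ∧
      (∀ γ, IsPosRoot n γ → Xgt γ (tr.getD j d).1 → (preS s tr d j) γ ≠ none) ∧
      (∀ j', j < j' → j' < tr.length → Xgt (tr.getD j d).1 (tr.getD j' d).1) := by
  intro tr s hrun
  induction hrun with
  | nil s => intro j hj; simp at hj
  | cons s ξ tr h0 h1 h2 h3 h4 ih =>
    intro j hj
    match j with
    | 0 =>
      refine ⟨rfl, h0, h1, h2, ?_⟩
      intro j' hj' hlen
      match j' with
      | (j'' + 1) =>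
        have : ((ξ, markStep s ξ) :: tr).getD (j'' + 1) d = tr.getD j'' d := rfl
        rw [this]
        have hlt : j'' < tr.length := by simpa using hlen
        rw [List.getD_eq_getElem tr d hlt]
        exact h3 _ (List.getElem_mem hlt)
    | (j'' + 1) =>
      have hlen : j'' < tr.length := by simpa using hj
      have key := ih j'' hlen
      have e1 : ((ξ, markStep s ξ) :: tr).getD (j'' + 1) d = tr.getD j'' d := rfl
      have e2 : preS s ((ξ, markStep s ξ) :: tr) d (j'' + 1) = preS (markStep s ξ) tr d j'' := by
        match j'' with
        | 0 => rfl
        | (u + 1) => rfl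
      rw [e1, e2]
      refine ⟨key.1, key.2.1, key.2.2.1, key.2.2.2.1, ?_⟩
      intro j' hj' hlen'
      match j' with
      | (j₃ + 1) =>
        have : ((ξ, markStep s ξ) :: tr).getD (j₃ + 1) d = tr.getD j₃ d := rfl
        rw [this]
        exact key.2.2.2.2 j₃ (by omega) (by simpa using hlen')

/-- Default element used with `getD` throughout. -/
noncomputable def ddflt (n : ℕ) (D : Set (ℕ × ℕ)) : (ℕ × ℕ) × MState :=
  ((0, 0), initMark n D)

lemma stateAfter_eq_preS (n : ℕ) (D : Set (ℕ × ℕ)) (j : ℕ) :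
    stateAfter n D j = preS (initMark n D) (diagSeq n D) (ddflt n D) j := by
  match j with
  | 0 => rfl
  | (u + 1) => rfl

lemma diagSeq_runOK (n : ℕ) (D : Set (ℕ × ℕ)) : RunOK n (initMark n D) (diagSeq n D) :=
  diagRun_runOK n (rootList n) (initMark n D) (rootList_sorted n)
    (fun _ h => rootList_pos h) (fun _ h _ => rootList_mem h)

section DS

variable {n : ℕ} {D : Set (ℕ × ℕ)}

lemma ds_facts {t : ℕ} (h1 : 1 ≤ t) (h2 : t ≤ numSteps n D) :
    stateAfter n D t = markStep (stateAfter n D (t - 1)) (xiRoot n D t) ∧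
    stateAfter n D (t - 1) (xiRoot n D t) = none ∧
    IsPosRoot n (xiRoot n D t) ∧
    (∀ γ, IsPosRoot n γ → Xgt γ (xiRoot n D t) →
      stateAfter n D (t - 1) γ ≠ none) ∧
    (∀ t', t < t' → t' ≤ numSteps n D →
      Xgt (xiRoot n D t) (xiRoot n D t')) := by
  obtain ⟨u, rfl⟩ : ∃ u, t = u + 1 := ⟨t - 1, by omega⟩
  have hu : u < (diagSeq n D).length := by
    have : numSteps n D = (diagSeq n D).length := rfl
    omega
  have key := runOK_facts (ddflt n D) (diagSeq n D) (initMark n D) (diagSeq_runOK n D) u hu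
  have ex : xiRoot n D (u + 1) = ((diagSeq n D).getD u (ddflt n D)).1 := rfl
  have es : stateAfter n D (u + 1) = ((diagSeq n D).getD u (ddflt n D)).2 := rfl
  have es' : stateAfter n D (u + 1 - 1) = preS (initMark n D) (diagSeq n D) (ddflt n D) u := by
    have : u + 1 - 1 = u := rfl
    rw [this, stateAfter_eq_preS]
  refine ⟨?_, ?_, ?_, ?_, ?_⟩
  · rw [es, es', ex]; exact key.1
  · rw [es', ex]; exact key.2.1
  · rw [ex]; exact key.2.2.1
  · rw [es', ex]; exact key.2.2.2.1
  · intro t' ht' hlen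
    obtain ⟨v, rfl⟩ : ∃ v, t' = v + 1 := ⟨t' - 1, by omega⟩
    have ex' : xiRoot n D (v + 1) = ((diagSeq n D).getD v (ddflt n D)).1 := rfl
    rw [ex, ex']
    exact key.2.2.2.2 v (by omega) (by have : numSteps n D = (diagSeq n D).length := rfl; omega)

lemma ds_stepEq {t : ℕ} (h1 : 1 ≤ t) (h2 : t ≤ numSteps n D) :
    stateAfter n D t = markStep (stateAfter n D (t - 1)) (xiRoot n D t) :=
  (ds_facts h1 h2).1

lemma ds_unm {t : ℕ} (h1 : 1 ≤ t) (h2 : t ≤ numSteps n D) :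
    stateAfter n D (t - 1) (xiRoot n D t) = none :=
  (ds_facts h1 h2).2.1

lemma ds_pos {t : ℕ} (h1 : 1 ≤ t) (h2 : t ≤ numSteps n D) :
    IsPosRoot n (xiRoot n D t) :=
  (ds_facts h1 h2).2.2.1

lemma ds_greatest {t : ℕ} (h1 : 1 ≤ t) (h2 : t ≤ numSteps n D) :
    ∀ γ, IsPosRoot n γ → Xgt γ (xiRoot n D t) → stateAfter n D (t - 1) γ ≠ none :=
  (ds_facts h1 h2).2.2.2.1

lemma ds_decr {t t' : ℕ} (h1 : 1 ≤ t) (ht : t < t') (h2 : t' ≤ numSteps n D) :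
    Xgt (xiRoot n D t) (xiRoot n D t') :=
  (ds_facts h1 (by omega)).2.2.2.2 t' ht h2

lemma ds_lt_of_xgt {t t' : ℕ} (h1 : 1 ≤ t) (h2 : t ≤ numSteps n D)
    (h1' : 1 ≤ t') (h2' : t' ≤ numSteps n D)
    (h : Xgt (xiRoot n D t') (xiRoot n D t)) : t' < t := by
  by_contra hc
  rcases Nat.lt_or_ge t t' with hlt | hge
  · exact xgt_asymm h (ds_decr h1 hlt h2')
  · have : t = t' := by omega
    subst this
    exact xgt_irrefl _ h

lemma ds_mono_some {t t' : ℕ} {γ : ℕ × ℕ} {m : Mark}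
    (h : stateAfter n D t γ = some m) (hle : t ≤ t') (h2 : t' ≤ numSteps n D) :
    stateAfter n D t' γ = some m := by
  induction t' with
  | zero => have : t = 0 := by omega
            subst this; exact h
  | succ u ih =>
    rcases Nat.lt_or_ge t (u + 1) with hlt | hge
    · have hu : stateAfter n D u γ = some m := ih (by omega) (by omega)
      have he := ds_stepEq (n := n) (D := D) (t := u + 1) (by omega) h2
      have hunm := ds_unm (n := n) (D := D) (t := u + 1) (by omega) h2
      rw [he]
      have : u + 1 - 1 = u := rfl
      rw [this] at hunm
      exact markStep_some hunm hu
    · have : t = u + 1 := by omega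
      subst this; exact h

lemma ds_mono_none {t t' : ℕ} {γ : ℕ × ℕ}
    (h : stateAfter n D t' γ = none) (hle : t ≤ t') (h2 : t' ≤ numSteps n D) :
    stateAfter n D t γ = none := by
  cases hc : stateAfter n D t γ with
  | none => rfl
  | some m => rw [ds_mono_some hc hle h2] at h; exact absurd h (by simp)

lemma ds_MD_marked {t : ℕ} {γ : ℕ × ℕ} (hγ : γ ∈ MD n D) (h2 : t ≤ numSteps n D) :
    stateAfter n D t γ = some Mark.bullet := by
  have h0 : stateAfter n D 0 γ = some Mark.bullet := by
    show initMark n D γ = some Mark.bullet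
    rw [initMark, if_pos hγ]
  exact ds_mono_some h0 (by omega) h2

end DS
section DS2

variable {n : ℕ} {D : Set (ℕ × ℕ)}

/-- Provenance of marks: every mark on the diagram arises either from step 0
(bullets on `M(D)`) or from some step `u` of the construction. -/
lemma ds_prov {t : ℕ} (h2 : t ≤ numSteps n D) :
    ∀ γ m, stateAfter n D t γ = some m →
      (m = Mark.bullet ∧ γ ∈ MD n D) ∨
      (m = Mark.otimes ∧ ∃ u, 1 ≤ u ∧ u ≤ t ∧ xiRoot n D u = γ) ∨
      (m = Mark.plus ∧ ∃ u, 1 ≤ u ∧ u ≤ t ∧ (xiRoot n D u).2 = γ.2 ∧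
        γ.2 < γ.1 ∧ γ.1 < (xiRoot n D u).1 ∧ stateAfter n D (u - 1) γ = none ∧
        stateAfter n D (u - 1) ((xiRoot n D u).1, γ.1) = none) ∨
      (m = Mark.minus ∧ ∃ u, 1 ≤ u ∧ u ≤ t ∧ (xiRoot n D u).1 = γ.1 ∧
        (xiRoot n D u).2 < γ.2 ∧ γ.2 < (xiRoot n D u).1 ∧
        stateAfter n D (u - 1) γ = none ∧
        stateAfter n D (u - 1) (γ.2, (xiRoot n D u).2) = none) := by
  induction t with
  | zero =>
    intro γ m h
    have : initMark n D γ = some m := h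
    rw [initMark] at this
    split_ifs at this with hmd
    · left
      refine ⟨?_, hmd⟩
      cases this; rfl
  | succ u ih =>
    intro γ m h
    rw [ds_stepEq (t := u + 1) (by omega) h2] at h
    have hu1 : u + 1 - 1 = u := rfl
    rw [markStep_eq] at h
    split_ifs at h with hc1 hc2 hc3
    · right; left
      refine ⟨by cases h; rfl, u + 1, by omega, le_refl _, hc1.symm⟩
    · right; right; left
      refine ⟨by cases h; rfl, u + 1, by omega, le_refl _, ?_⟩
      rw [hu1]
      obtain ⟨a1, a2, a3, a4, a5⟩ := hc2
      exact ⟨a1.symm, by omega, a3, a4, a5⟩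
    · right; right; right
      refine ⟨by cases h; rfl, u + 1, by omega, le_refl _, ?_⟩
      rw [hu1]
      obtain ⟨a1, a2, a3, a4, a5⟩ := hc3
      exact ⟨a1.symm, a2, a3, a4, a5⟩
    · rcases ih (by omega) γ m h with h' | h' | h' | h'
      · exact Or.inl h'
      · obtain ⟨hm, v, hv1, hv2, hv3⟩ := h'
        exact Or.inr (Or.inl ⟨hm, v, hv1, by omega, hv3⟩)
      · obtain ⟨hm, v, hv1, hv2, hv3⟩ := h'
        exact Or.inr (Or.inr (Or.inl ⟨hm, v, hv1, by omega, hv3⟩))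
      · obtain ⟨hm, v, hv1, hv2, hv3⟩ := h'
        exact Or.inr (Or.inr (Or.inr ⟨hm, v, hv1, by omega, hv3⟩))

lemma ds_prov_otimes {t : ℕ} (h2 : t ≤ numSteps n D) {γ : ℕ × ℕ}
    (h : stateAfter n D t γ = some Mark.otimes) :
    ∃ u, 1 ≤ u ∧ u ≤ t ∧ xiRoot n D u = γ := by
  rcases ds_prov h2 γ _ h with h' | h' | h' | h' <;>
    first | exact h'.2 | exact absurd h'.1 (by simp)

lemma ds_prov_bullet {t : ℕ} (h2 : t ≤ numSteps n D) {γ : ℕ × ℕ}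
    (h : stateAfter n D t γ = some Mark.bullet) : γ ∈ MD n D := by
  rcases ds_prov h2 γ _ h with h' | h' | h' | h' <;>
    first | exact h'.2 | exact absurd h'.1 (by simp)

lemma ds_prov_plus {t : ℕ} (h2 : t ≤ numSteps n D) {γ : ℕ × ℕ}
    (h : stateAfter n D t γ = some Mark.plus) :
    ∃ u, 1 ≤ u ∧ u ≤ t ∧ (xiRoot n D u).2 = γ.2 ∧ γ.2 < γ.1 ∧ γ.1 < (xiRoot n D u).1 ∧
      stateAfter n D (u - 1) γ = none ∧
      stateAfter n D (u - 1) ((xiRoot n D u).1, γ.1) = none := by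
  rcases ds_prov h2 γ _ h with h' | h' | h' | h' <;>
    first | exact h'.2 | exact absurd h'.1 (by simp)

lemma ds_prov_minus {t : ℕ} (h2 : t ≤ numSteps n D) {γ : ℕ × ℕ}
    (h : stateAfter n D t γ = some Mark.minus) :
    ∃ u, 1 ≤ u ∧ u ≤ t ∧ (xiRoot n D u).1 = γ.1 ∧ (xiRoot n D u).2 < γ.2 ∧
      γ.2 < (xiRoot n D u).1 ∧ stateAfter n D (u - 1) γ = none ∧
      stateAfter n D (u - 1) (γ.2, (xiRoot n D u).2) = none := by
  rcases ds_prov h2 γ _ h with h' | h' | h' | h' <;>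
    first | exact h'.2 | exact absurd h'.1 (by simp)

/-- A root that is unmarked at the start of a step is in `D` or singular. -/
lemma ds_reason {t : ℕ} (h1 : 1 ≤ t) (h2 : t ≤ numSteps n D) :
    xiRoot n D t ∈ D ∨ IsSingular n D (xiRoot n D t) := by
  have hpos := ds_pos h1 h2
  have hunm := ds_unm h1 h2
  by_contra hc
  push_neg at hc
  have hmd : xiRoot n D t ∈ MD n D := ⟨hpos, hc.2, hc.1⟩
  have := ds_MD_marked hmd (t := t - 1) (by omega)
  rw [hunm] at this
  exact absurd this (by simp)

lemma singular_of_row {γ : ℕ × ℕ} (hpos : IsPosRoot n γ) {y : ℕ}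
    (hD : (γ.1, y) ∈ D) (hy1 : 1 ≤ y) (hy2 : y < γ.2) : IsSingular n D γ := by
  refine ⟨hpos, (γ.2, y), (γ.1, y), ⟨hy1, hy2, by obtain ⟨p1, p2, p3⟩ := hpos; omega⟩, ?_, hD⟩
  · left; exact ⟨rfl, rfl⟩

lemma singular_of_col {γ : ℕ × ℕ} (hpos : IsPosRoot n γ) {z : ℕ}
    (hD : (z, γ.2) ∈ D) (hz1 : γ.1 < z) (hz2 : z ≤ n) : IsSingular n D γ := by
  refine ⟨hpos, (z, γ.1), (z, γ.2), ⟨by obtain ⟨p1, p2, p3⟩ := hpos; omega, hz1, hz2⟩, ?_, hD⟩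
  · right; exact ⟨rfl, rfl⟩

lemma singular_cases {γ : ℕ × ℕ} (h : IsSingular n D γ) :
    (∃ y, 1 ≤ y ∧ y < γ.2 ∧ (γ.1, y) ∈ D) ∨ (∃ z, γ.1 < z ∧ z ≤ n ∧ (z, γ.2) ∈ D) := by
  obtain ⟨hpos, β, γ', hβ, hsum, hγ'⟩ := h
  rcases hsum with ⟨h1, h2⟩ | ⟨h1, h2⟩
  · left
    refine ⟨β.2, hβ.1, ?_, ?_⟩
    · have := hβ.2.1; omega
    · rw [← h2]; exact hγ'
  · right
    refine ⟨β.1, ?_, hβ.2.2, ?_⟩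
    · have := hβ.2.1; omega
    · rw [← h2]; exact hγ'

end DS2
/-- The key facts about the diagram of a basic subset, proven by mutual strong
induction on the step index `k`:
(1) no root of `C(D)` lies strictly to the left of a root of `D` in its row;
(2) roots of `D` are always either unmarked or marked `⊗`;
(3) Statement (P): if at step `k` (with `ξ_k = (X,c)`) the place `(X,r)`
    (`c < r < X`) is unmarked while `(r,c)` is marked, then some earlier `⊗`
    lies in row `r` strictly to the left of column `c`. -/
theorem st6_key {n : ℕ} {D : Set (ℕ × ℕ)} (hD : IsBasic n D) :
    ∀ k, 1 ≤ k → k ≤ numSteps n D →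
      ((∀ a b, (a, b) ∈ D → (xiRoot n D k).1 = a → (xiRoot n D k).2 < b → False) ∧
       (∀ δ ∈ D, stateAfter n D k δ = none ∨ stateAfter n D k δ = some Mark.otimes) ∧
       (∀ r, (xiRoot n D k).2 < r → r < (xiRoot n D k).1 →
         stateAfter n D (k - 1) ((xiRoot n D k).1, r) = none →
         stateAfter n D (k - 1) (r, (xiRoot n D k).2) ≠ none →
         ∃ t, 1 ≤ t ∧ t < k ∧ (xiRoot n D t).1 = r ∧
           (xiRoot n D t).2 < (xiRoot n D k).2)) := by
  intro k
  induction k using Nat.strong_induction_on with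
  | _ k IH =>
  intro hk1 hk2
  have B0 : ∀ δ ∈ D, stateAfter n D 0 δ = none := by
    intro δ hδ
    show initMark n D δ = none
    rw [initMark, if_neg]
    intro hmd; exact hmd.2.2 hδ
  have B' : ∀ t, t < k → ∀ δ ∈ D,
      stateAfter n D t δ = none ∨ stateAfter n D t δ = some Mark.otimes := by
    intro t ht δ hδ
    rcases Nat.eq_zero_or_pos t with rfl | hpos
    · exact Or.inl (B0 δ hδ)
    · exact (IH t ht hpos (by omega)).2.1 δ hδ
  have L' : ∀ t, 1 ≤ t → t < k → ∀ a b, (a, b) ∈ D → (xiRoot n D t).1 = a →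
      (xiRoot n D t).2 < b → False := fun t t1 t2 => (IH t t2 t1 (by omega)).1
  have P' : ∀ t, 1 ≤ t → t < k → ∀ r, (xiRoot n D t).2 < r → r < (xiRoot n D t).1 →
      stateAfter n D (t - 1) ((xiRoot n D t).1, r) = none →
      stateAfter n D (t - 1) (r, (xiRoot n D t).2) ≠ none →
      ∃ u, 1 ≤ u ∧ u < t ∧ (xiRoot n D u).1 = r ∧
        (xiRoot n D u).2 < (xiRoot n D t).2 :=
    fun t t1 t2 => (IH t t2 t1 (by omega)).2.2
  -- a D-root strictly `≻`-greater than `ξ_t` is `⊗` at some earlier step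
  have oD : ∀ t, 1 ≤ t → t ≤ k → ∀ ρ : ℕ × ℕ, ρ ∈ D → Xgt ρ (xiRoot n D t) →
      ∃ w, 1 ≤ w ∧ w ≤ t - 1 ∧ xiRoot n D w = ρ := by
    intro t t1 t2 ρ hρ hgt
    have hum := ds_greatest t1 (by omega) ρ (hD.1 ρ hρ) hgt
    rcases B' (t - 1) (by omega) ρ hρ with h | h
    · exact absurd h hum
    · exact ds_prov_otimes (t := t - 1) (by omega) h
  obtain ⟨hpk1, hpk2, hpk3⟩ := ds_pos hk1 hk2
  have hunmk : stateAfter n D (k - 1) (xiRoot n D k) = none := ds_unm hk1 hk2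
  ---------------------------------------------------------------------------
  -- Part (L) at step k
  ---------------------------------------------------------------------------
  have Lk : ∀ a b, (a, b) ∈ D → (xiRoot n D k).1 = a → (xiRoot n D k).2 < b → False := by
    intro a b hab h1 h2
    rcases ds_reason hk1 hk2 with hDk | hsing
    · have heq := hD.2.1 _ hDk _ hab (by rw [h1])
      have : (xiRoot n D k).2 = b := by rw [heq]
      omega
    · rcases singular_cases hsing with ⟨y, _, hy2, hyD⟩ | ⟨z, hz1, hz2, hzD⟩
      · rw [h1] at hyD
        have heq := hD.2.1 _ hyD _ hab rfl
        have : y = b := congrArg Prod.snd heq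
        omega
      · -- column-singular: (z, ξ.2) ∈ D, ξ.1 < z
        obtain ⟨w, hw1, hw2, hw3⟩ := oD k hk1 (le_refl k) (z, (xiRoot n D k).2) hzD
          (Or.inr ⟨rfl, hz1⟩)
        have hwle : w ≤ numSteps n D := by omega
        have hnone : stateAfter n D (w - 1) (xiRoot n D k) = none :=
          ds_mono_none hunmk (by omega) (by omega)
        cases hza : stateAfter n D (w - 1) (z, (xiRoot n D k).1) with
        | none =>
          have hplus : stateAfter n D w (xiRoot n D k) = some Mark.plus := by
            rw [ds_stepEq hw1 hwle, hw3]
            refine markStep_plus ?_ ?_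
            · intro hh
              have := congrArg Prod.fst hh
              simp at this
              omega
            · exact ⟨rfl, hpk2, hz1, hnone, hza⟩
          have hcontra := ds_mono_some hplus (show w ≤ k - 1 by omega) (by omega)
          exact absurd (hcontra.symm.trans hunmk) (by simp)
        | some m =>
          cases m with
          | bullet =>
            have hmd := ds_prov_bullet (t := w - 1) (by omega) hza
            refine hmd.2.1 (singular_of_row ⟨?_, ?_, hz2⟩ (y := (xiRoot n D k).2) ?_ hpk1 ?_)
            · omega
            · simp; omega
            · simpa using hzD
            · simp; omega
          | otimes =>
            obtain ⟨u, hu1, hu2, hu3⟩ := ds_prov_otimes (t := w - 1) (by omega) hza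
            have hxu := ds_decr hu1 (show u < w by omega) hwle
            rw [hu3, hw3] at hxu
            rcases hxu with h' | ⟨h', _⟩ <;> simp at h' <;> omega
          | plus =>
            obtain ⟨u, hu1, hu2, hu3, _, _, _, _⟩ := ds_prov_plus (t := w - 1) (by omega) hza
            have hxu := ds_decr hu1 (show u < w by omega) hwle
            rw [hw3] at hxu
            simp at hu3
            rcases hxu with h' | ⟨h', _⟩ <;> simp at h' <;> omega
          | minus =>
            obtain ⟨u, hu1, hu2, hu3, _, _, _, _⟩ := ds_prov_minus (t := w - 1) (by omega) hza
            have hxu := ds_decr hu1 (show u < w by omega) hwle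
            rw [hw3] at hxu
            simp at hu3
            have hy' : (xiRoot n D u).2 < (xiRoot n D k).2 := by
              rcases hxu with h' | ⟨h', h''⟩ <;> simp at h' <;> omega
            exact L' u hu1 (by omega) z (xiRoot n D k).2 hzD hu3 hy'
  ---------------------------------------------------------------------------
  -- Part (B) at step k
  ---------------------------------------------------------------------------
  have Bk : ∀ δ ∈ D, stateAfter n D k δ = none ∨ stateAfter n D k δ = some Mark.otimes := by
    intro δ hδ
    obtain ⟨a, b⟩ := δ
    rw [ds_stepEq hk1 hk2, markStep_eq]
    split_ifs with hc1 hc2 hc3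
    · exact Or.inr rfl
    · exfalso
      obtain ⟨e1, e2, e3, e4, e5⟩ := hc2
      simp only [] at e1 e2 e3 e4 e5
      rcases ds_reason hk1 hk2 with hDk | hsing
      · have heq := hD.2.2 _ hDk _ hδ (by simpa using e1.symm)
        have := congrArg Prod.fst heq
        simp at this
        omega
      · rcases singular_cases hsing with ⟨b', hb'1, hb'2, hb'D⟩ | ⟨z, hz1, hz2, hzD⟩
        · obtain ⟨w, hw1, hw2, hw3⟩ := oD k hk1 le_rfl ((xiRoot n D k).1, b') hb'D
            (Or.inl hb'2)
          have hwle : w ≤ numSteps n D := by omega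
          have e2' : (xiRoot n D k).2 < a := by simpa using e2
          have e3' : a < (xiRoot n D k).1 := by simpa using e3
          have hma : stateAfter n D (w - 1) ((xiRoot n D k).1, a) = none :=
            ds_mono_none e5 (by omega) (by omega)
          cases hab' : stateAfter n D (w - 1) (a, b') with
          | none =>
            have hminus : stateAfter n D w ((xiRoot n D k).1, a) = some Mark.minus := by
              rw [ds_stepEq hw1 hwle, hw3]
              refine markStep_minus ?_ ?_ ?_
              · intro hh
                have := congrArg Prod.snd hh
                simp at this
                omega
              · intro hpc
                have := hpc.1
                simp at this
                omega
              · exact ⟨rfl, by simp; omega, by simpa using e3', hma, hab'⟩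
            have hcontra := ds_mono_some hminus (show w ≤ k - 1 by omega) (by omega)
            exact absurd (hcontra.symm.trans e5) (by simp)
          | some m' =>
            obtain ⟨v, hv1, hv2, hv3, hv4⟩ := P' w hw1 (by omega) a
              (by rw [hw3]; simpa using hb'2.trans e2')
              (by rw [hw3]; simpa using e3')
              (by rw [hw3]; simpa using hma)
              (by rw [hw3]; simp; rw [hab']; simp)
            rw [hw3] at hv4
            simp at hv4
            exact L' v hv1 (by omega) a b hδ hv3 (by omega)
        · have heq := hD.2.2 _ hzD _ hδ (by simpa using e1.symm)
          have := congrArg Prod.fst heq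
          simp at this
          have e3' : a < (xiRoot n D k).1 := by simpa using e3
          omega
    · exfalso
      obtain ⟨e1, e2, _, _, _⟩ := hc3
      have e1' : a = (xiRoot n D k).1 := by simpa using e1
      have e2' : (xiRoot n D k).2 < b := by simpa using e2
      exact Lk a b hδ e1'.symm e2'
    · exact B' (k - 1) (by omega) _ hδ
  ---------------------------------------------------------------------------
  -- Part (P) at step k
  ---------------------------------------------------------------------------
  have Pk : ∀ r, (xiRoot n D k).2 < r → r < (xiRoot n D k).1 →
      stateAfter n D (k - 1) ((xiRoot n D k).1, r) = none →
      stateAfter n D (k - 1) (r, (xiRoot n D k).2) ≠ none →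
      ∃ t, 1 ≤ t ∧ t < k ∧ (xiRoot n D t).1 = r ∧
        (xiRoot n D t).2 < (xiRoot n D k).2 := by
    intro r hr1 hr2 hXr hrc
    obtain ⟨m₀, hm₀⟩ : ∃ m, stateAfter n D (k - 1) (r, (xiRoot n D k).2) = some m := by
      cases h : stateAfter n D (k - 1) (r, (xiRoot n D k).2) with
      | none => exact absurd h hrc
      | some m => exact ⟨m, rfl⟩
    cases m₀ with
    | otimes =>
      exfalso
      obtain ⟨u, hu1, hu2, hu3⟩ := ds_prov_otimes (t := k - 1) (by omega) hm₀
      have hxu := ds_decr hu1 (show u < k by omega) hk2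
      rw [hu3] at hxu
      rcases hxu with h' | ⟨h', h''⟩
      · simp at h'
      · simp at h''; omega
    | minus =>
      obtain ⟨u, hu1, hu2, hu3, hu4, _, _, _⟩ := ds_prov_minus (t := k - 1) (by omega) hm₀
      exact ⟨u, hu1, by omega, by simpa using hu3, by simpa using hu4⟩
    | bullet =>
      have hmd := ds_prov_bullet (t := k - 1) (by omega) hm₀
      rcases ds_reason hk1 hk2 with hDk | hsing
      · exfalso
        refine hmd.2.1 (singular_of_col ⟨hpk1, hr1, by omega⟩ (z := (xiRoot n D k).1)
          ?_ hr2 hpk3)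
        simpa using hDk
      · rcases singular_cases hsing with ⟨c', hc'1, hc'2, hc'D⟩ | ⟨z, hz1, hz2, hzD⟩
        · obtain ⟨w, hw1, hw2, hw3⟩ := oD k hk1 le_rfl ((xiRoot n D k).1, c') hc'D
            (Or.inl hc'2)
          have hwle : w ≤ numSteps n D := by omega
          have hXr' : stateAfter n D (w - 1) ((xiRoot n D k).1, r) = none :=
            ds_mono_none hXr (by omega) (by omega)
          cases hrc' : stateAfter n D (w - 1) (r, c') with
          | none =>
            exfalso
            have hminus : stateAfter n D w ((xiRoot n D k).1, r) = some Mark.minus := by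
              rw [ds_stepEq hw1 hwle, hw3]
              refine markStep_minus ?_ ?_ ?_
              · intro hh
                have := congrArg Prod.snd hh
                simp at this
                omega
              · intro hpc
                have := hpc.1
                simp at this
                omega
              · exact ⟨rfl, by simp; omega, by simpa using hr2, hXr', hrc'⟩
            have hcontra := ds_mono_some hminus (show w ≤ k - 1 by omega) (by omega)
            exact absurd (hcontra.symm.trans hXr) (by simp)
          | some m' =>
            obtain ⟨v, hv1, hv2, hv3, hv4⟩ := P' w hw1 (by omega) r
              (by rw [hw3]; simp; omega)
              (by rw [hw3]; simpa using hr2)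
              (by rw [hw3]; simpa using hXr')
              (by rw [hw3]; simp; rw [hrc']; simp)
            refine ⟨v, hv1, by omega, hv3, ?_⟩
            rw [hw3] at hv4
            simp at hv4
            omega
        · exfalso
          refine hmd.2.1 (singular_of_col ⟨hpk1, hr1, by omega⟩ (z := z) hzD
            (by simp; omega) hz2)
    | plus =>
      obtain ⟨t, ht1, ht2, ht3, _, ht5, ht6, ht7⟩ := ds_prov_plus (t := k - 1) (by omega) hm₀
      have ht3' : (xiRoot n D t).2 = (xiRoot n D k).2 := by simpa using ht3
      have ht5' : r < (xiRoot n D t).1 := by simpa using ht5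
      have ht6' : stateAfter n D (t - 1) (r, (xiRoot n D k).2) = none := ht6
      have ht7' : stateAfter n D (t - 1) ((xiRoot n D t).1, r) = none := by simpa using ht7
      have hmX : (xiRoot n D k).1 < (xiRoot n D t).1 := by
        have hxt := ds_decr ht1 (show t < k by omega) hk2
        rcases hxt with h' | ⟨h', h''⟩
        · omega
        · exact h''
      have htpos := ds_pos ht1 (show t ≤ numSteps n D by omega)
      rcases ds_reason ht1 (show t ≤ numSteps n D by omega) with hDt | hsing
      · -- (a) ξ_t ∈ D : contradiction
        exfalso
        have hXc : stateAfter n D (t - 1) (xiRoot n D k) = none :=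
          ds_mono_none hunmk (by omega) (by omega)
        cases hmXm : stateAfter n D (t - 1) ((xiRoot n D t).1, (xiRoot n D k).1) with
        | none =>
          have hplus : stateAfter n D t (xiRoot n D k) = some Mark.plus := by
            rw [ds_stepEq ht1 (by omega)]
            refine markStep_plus ?_ ?_
            · intro hh
              have := congrArg Prod.fst hh
              omega
            · exact ⟨ht3'.symm, by omega, hmX, hXc, hmXm⟩
          have hcontra := ds_mono_some hplus (show t ≤ k - 1 by omega) (by omega)
          exact absurd (hcontra.symm.trans hunmk) (by simp)
        | some m' =>
          cases m' with
          | bullet =>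
            have hmd' := ds_prov_bullet (t := t - 1) (by omega) hmXm
            refine hmd'.2.1 (singular_of_row ⟨by omega, by simpa using hmX, ?_⟩
              (y := (xiRoot n D t).2) ?_ ?_ ?_)
            · simpa using htpos.2.2
            · simp
              rw [← Prod.mk.eta (p := xiRoot n D t)] at hDt
              exact hDt
            · omega
            · simp; omega
          | otimes =>
            obtain ⟨u, hu1, hu2, hu3⟩ := ds_prov_otimes (t := t - 1) (by omega) hmXm
            have hxu := ds_decr hu1 (show u < t by omega) (show t ≤ numSteps n D by omega)
            rw [hu3] at hxu
            rcases hxu with h' | ⟨h', h''⟩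
            · simp at h'; omega
            · simp at h''
          | minus =>
            obtain ⟨u, hu1, hu2, hu3, hu4, _, _, _⟩ := ds_prov_minus (t := t - 1)
              (by omega) hmXm
            have hxu := ds_decr hu1 (show u < t by omega) (show t ≤ numSteps n D by omega)
            simp at hu3 hu4
            have hyc : (xiRoot n D u).2 < (xiRoot n D t).2 := by
              rcases hxu with h' | ⟨h', h''⟩
              · exact h'
              · omega
            refine L' u hu1 (by omega) (xiRoot n D t).1 (xiRoot n D t).2 ?_ hu3 hyc
            rw [Prod.mk.eta]
            exact hDt
          | plus =>
            obtain ⟨u, hu1, hu2, hu3, _, hu5, _, _⟩ := ds_prov_plus (t := t - 1)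
              (by omega) hmXm
            have hxu := ds_decr hu1 (show u < t by omega) (show t ≤ numSteps n D by omega)
            simp at hu3
            rcases hxu with h' | ⟨h', h''⟩
            · omega
            · omega
      · rcases singular_cases hsing with ⟨c₂, hc₂1, hc₂2, hc₂D⟩ | ⟨z, hz1, hz2, hzD⟩
        · -- (b) row-singular at ξ_t
          obtain ⟨w, hw1, hw2, hw3⟩ := oD t ht1 (by omega) ((xiRoot n D t).1, c₂) hc₂D
            (Or.inl hc₂2)
          have hwle : w ≤ numSteps n D := by omega
          have hmr : stateAfter n D (w - 1) ((xiRoot n D t).1, r) = none :=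
            ds_mono_none ht7' (by omega) (by omega)
          cases hrc₂ : stateAfter n D (w - 1) (r, c₂) with
          | none =>
            exfalso
            have hminus : stateAfter n D w ((xiRoot n D t).1, r) = some Mark.minus := by
              rw [ds_stepEq hw1 hwle, hw3]
              refine markStep_minus ?_ ?_ ?_
              · intro hh
                have := congrArg Prod.snd hh
                simp at this
                omega
              · intro hpc
                have := hpc.1
                simp at this
                omega
              · exact ⟨rfl, by simp; omega, by simp; omega, hmr, hrc₂⟩
            have hcontra := ds_mono_some hminus (show w ≤ t - 1 by omega) (by omega)
            exact absurd (hcontra.symm.trans ht7') (by simp)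
          | some m' =>
            obtain ⟨v, hv1, hv2, hv3, hv4⟩ := P' w hw1 (by omega) r
              (by rw [hw3]; simp; omega)
              (by rw [hw3]; simp; omega)
              (by rw [hw3]; simpa using hmr)
              (by rw [hw3]; simp; rw [hrc₂]; simp)
            refine ⟨v, hv1, by omega, hv3, ?_⟩
            rw [hw3] at hv4
            simp at hv4
            omega
        · -- (c) column-singular at ξ_t : contradiction
          exfalso
          obtain ⟨w, hw1, hw2, hw3⟩ := oD t ht1 (by omega) (z, (xiRoot n D t).2) hzD
            (Or.inr ⟨rfl, hz1⟩)
          have hwle : w ≤ numSteps n D := by omega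
          have hrc0 : stateAfter n D (w - 1) (r, (xiRoot n D k).2) = none :=
            ds_mono_none ht6' (by omega) (by omega)
          cases hzr : stateAfter n D (w - 1) (z, r) with
          | none =>
            have hplus : stateAfter n D w (r, (xiRoot n D k).2) = some Mark.plus := by
              rw [ds_stepEq hw1 hwle, hw3]
              refine markStep_plus ?_ ?_
              · intro hh
                have := congrArg Prod.fst hh
                simp at this
                omega
              · exact ⟨by simp [ht3'], by simp; omega, by simp; omega, hrc0, hzr⟩
            have hcontra := ds_mono_some hplus (show w ≤ t - 1 by omega) (by omega)
            exact absurd (hcontra.symm.trans ht6') (by simp)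
          | some m' =>
            cases m' with
            | bullet =>
              have hmd' := ds_prov_bullet (t := w - 1) (by omega) hzr
              refine hmd'.2.1 (singular_of_row ⟨by omega, by simp; omega, hz2⟩
                (y := (xiRoot n D t).2) (by simpa using hzD) (by omega) (by simp; omega))
            | otimes =>
              obtain ⟨u, hu1, hu2, hu3⟩ := ds_prov_otimes (t := w - 1) (by omega) hzr
              have hxu := ds_decr hu1 (show u < w by omega) hwle
              rw [hu3, hw3] at hxu
              rcases hxu with h' | ⟨h', h''⟩
              · simp at h'; omega
              · simp at h''
            | minus =>
              obtain ⟨u, hu1, hu2, hu3, hu4, _, _, _⟩ := ds_prov_minus (t := w - 1)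
                (by omega) hzr
              have hxu := ds_decr hu1 (show u < w by omega) hwle
              rw [hw3] at hxu
              simp at hu3 hu4
              have hyc : (xiRoot n D u).2 < (xiRoot n D t).2 := by
                rcases hxu with h' | ⟨h', h''⟩
                · simpa using h'
                · simp at h''; omega
              exact L' u hu1 (by omega) z (xiRoot n D t).2 hzD hu3 hyc
            | plus =>
              obtain ⟨u, hu1, hu2, hu3, _, hu5, _, _⟩ := ds_prov_plus (t := w - 1)
                (by omega) hzr
              have hxu := ds_decr hu1 (show u < w by omega) hwle
              rw [hw3] at hxu
              simp at hu3
              rcases hxu with h' | ⟨h', h''⟩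
              · simp at h'; omega
              · simp at h'; omega
  exact ⟨Lk, Bk, Pk⟩
lemma mem_CD_of_step {n : ℕ} {D : Set (ℕ × ℕ)} {t : ℕ} (h1 : 1 ≤ t)
    (h2 : t ≤ numSteps n D) : xiRoot n D t ∈ CD n D := by
  have hlt : t - 1 < (diagSeq n D).length := by
    have : numSteps n D = (diagSeq n D).length := rfl
    omega
  have : xiRoot n D t = ((diagSeq n D).getD (t - 1) (ddflt n D)).1 := rfl
  rw [List.getD_eq_getElem _ _ hlt] at this
  show xiRoot n D t ∈ (diagSeq n D).map Prod.fst
  rw [this, List.mem_map]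
  exact ⟨_, List.getElem_mem hlt, rfl⟩

lemma step_of_mem_CD {n : ℕ} {D : Set (ℕ × ℕ)} {γ : ℕ × ℕ} (h : γ ∈ CD n D) :
    ∃ t, 1 ≤ t ∧ t ≤ numSteps n D ∧ xiRoot n D t = γ := by
  have h' : γ ∈ (diagSeq n D).map Prod.fst := h
  rw [List.mem_map] at h'
  obtain ⟨p, hp, hpγ⟩ := h'
  rw [List.mem_iff_getElem] at hp
  obtain ⟨i, hi, hip⟩ := hp
  refine ⟨i + 1, by omega, ?_, ?_⟩
  · have : numSteps n D = (diagSeq n D).length := rfl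
    omega
  · have : xiRoot n D (i + 1) = ((diagSeq n D).getD i (ddflt n D)).1 := rfl
    rw [this, List.getD_eq_getElem _ _ hi, hip, hpγ]

/-- let `ξ = ξ_i ∈ C(D)`, `ξ = α + β` with `col α = col ξ` and
`row β = row ξ`, and suppose `α` and `β` are unmarked before step `i`.
If `A_ξ ≠ ∅`, then `A_α ≠ ∅`. -/
theorem stmt6 (n : ℕ) (hn : 2 ≤ n) (D : Set (ℕ × ℕ)) (hD : IsBasic n D)
    (i : ℕ) (hi1 : 1 ≤ i) (hic : i ≤ numSteps n D)
    (α β : ℕ × ℕ) (hα : IsPosRoot n α) (hβ : IsPosRoot n β)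
    (hsum : RootSum α β (xiRoot n D i))
    (hcol : α.2 = (xiRoot n D i).2) (hrow : β.1 = (xiRoot n D i).1)
    (hαu : stateAfter n D (i - 1) α = none) (hβu : stateAfter n D (i - 1) β = none)
    (hAξ : (AD n D (xiRoot n D i)).Nonempty) :
    (AD n D α).Nonempty := by
  obtain ⟨hα1, hα2, hα3⟩ := hα
  obtain ⟨hβ1, hβ2, hβ3⟩ := hβ
  obtain ⟨hξ1, hξ2, hξ3⟩ := ds_pos hi1 hic
  -- Decompose the root sum: `α = (r, C)`, `β = (X, r)`, `ξ_i = (X, C)`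
  rcases hsum with ⟨e1, e2⟩ | ⟨e1, e2⟩
  · exfalso
    have h1 := congrArg Prod.fst e2
    have h2 := congrArg Prod.snd e2
    simp at h1 h2
    omega
  · -- e1 : β.2 = α.1, e2 : ξ_i = (β.1, α.2)
    have hX : (xiRoot n D i).1 = β.1 := by rw [e2]
    have hC : (xiRoot n D i).2 = α.2 := by rw [e2]
    -- the witness in A_ξ
    obtain ⟨γ', hγ'CD, hγ'row, hγ'col⟩ := hAξ
    obtain ⟨j, hj1, hj2, hj3⟩ := step_of_mem_CD hγ'CD
    -- j < i
    have hji : j < i := by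
      refine ds_lt_of_xgt hi1 hic hj1 hj2 ?_
      rw [hj3]
      exact Or.inl hγ'col
    -- the hypotheses of statement (P) at step j with r := α.1
    have hβ' : β = ((xiRoot n D j).1, α.1) := by
      rw [hj3, hγ'row, hX]
      exact Prod.ext rfl e1
    have hXr : stateAfter n D (j - 1) ((xiRoot n D j).1, α.1) = none := by
      rw [← hβ']
      exact ds_mono_none hβu (by omega) (by omega)
    have hr1 : (xiRoot n D j).2 < α.1 := by
      rw [hj3]
      omega
    have hr2 : α.1 < (xiRoot n D j).1 := by
      rw [hj3, hγ'row, hX]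
      omega
    have hrc : stateAfter n D (j - 1) (α.1, (xiRoot n D j).2) ≠ none := by
      intro hnone
      -- otherwise β would get marked `−` at step j
      have hminus : stateAfter n D j ((xiRoot n D j).1, α.1) = some Mark.minus := by
        rw [ds_stepEq hj1 hj2]
        refine markStep_minus ?_ ?_ ?_
        · intro hh
          have := congrArg Prod.snd hh
          simp at this
          omega
        · intro hpc
          have := hpc.1
          simp at this
          omega
        · exact ⟨rfl, by simpa using hr1, by simpa using hr2, hXr, by simpa using hnone⟩
      have hcontra := ds_mono_some hminus (show j ≤ i - 1 by omega) (by omega)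
      rw [← hβ'] at hcontra
      exact absurd (hcontra.symm.trans hβu) (by simp)
    obtain ⟨t, ht1, ht2, ht3, ht4⟩ := (st6_key hD j hj1 hj2).2.2 α.1 hr1 hr2 hXr hrc
    refine ⟨xiRoot n D t, mem_CD_of_step ht1 (by omega), ht3, ?_⟩
    rw [hj3] at ht4
    omega
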